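/- arXiv:1910.07572 — 7 statements merged into one kernel-verified Lean document; each statement's English description precedes it below -/
import Mathlib

section
/- Let F be a cumulative distribution function on ℝ with quantile function Q, and let p > 0. Then |x|^p F(x) → 0 as x → −∞ and |x|^p (1−F(x)) → 0 as x → +∞ if and only if u^{1/p}(1−u)^{1/p} Q(u) → 0 as u → 0⁺ and as u → 1⁻. -/
/-!
On `ℝ`, `F` is an order isomorphism onto `(0, 1)` with inverse `Q`, so the substitution `u = F x`
carries `atBot` to `𝓝[>] 0` and `atTop` to `𝓝[<] 1`, and turns `|x| ^ p * F x` into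
`|Q u| ^ p * u`. Since `t ↦ t ^ p` is a homeomorphism of `[0, ∞)` fixing `0`, this tends to `0`
exactly when `u ^ (1 / p) * Q u` does, and near `0` the extra factor `(1 - u) ^ (1 / p) → 1` is
harmless. The upper tail is symmetric.
-/

open MeasureTheory Set Filter Topology

section RpowLimits

variable {ι : Type*} {l : Filter ι}

theorem tendsto_rpow_nhds_zero_iff {a : ι → ℝ} (ha : ∀ᶠ i in l, 0 ≤ a i) {p : ℝ} (hp : 0 < p) :
    Tendsto (fun i => a i ^ p) l (𝓝 0) ↔ Tendsto a l (𝓝 0) := by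
  refine ⟨fun h => ?_, fun h => by simpa [Real.zero_rpow hp.ne'] using h.rpow_const (Or.inr hp.le)⟩
  have h' := h.rpow_const (p := p⁻¹) (Or.inr (inv_nonneg.2 hp.le))
  rw [Real.zero_rpow (inv_ne_zero hp.ne')] at h'
  exact h'.congr' (ha.mono fun i hi => Real.rpow_rpow_inv hi hp.ne')

theorem tendsto_rpow_one_div_mul_iff_tendsto_abs_rpow_mul {w a : ι → ℝ}
    (hw : ∀ᶠ i in l, 0 ≤ w i) {p : ℝ} (hp : 0 < p) :
    Tendsto (fun i => w i ^ (1 / p) * a i) l (𝓝 0) ↔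
      Tendsto (fun i => |a i| ^ p * w i) l (𝓝 0) := by
  rw [tendsto_zero_iff_abs_tendsto_zero, Function.comp_def,
    ← tendsto_rpow_nhds_zero_iff (.of_forall fun _ => abs_nonneg _) hp]
  refine tendsto_congr' (hw.mono fun i (hi : 0 ≤ w i) => ?_)
  dsimp only
  have hw' : 0 ≤ w i ^ (1 / p) := Real.rpow_nonneg hi _
  rw [abs_mul, abs_of_nonneg hw', Real.mul_rpow hw' (abs_nonneg _), ← Real.rpow_mul hi,
    one_div_mul_cancel hp.ne', Real.rpow_one, mul_comm]

theorem tendsto_mul_nhds_zero_iff_of_tendsto {b a : ι → ℝ} {c : ℝ} (hb : Tendsto b l (𝓝 c))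
    (hc : c ≠ 0) : Tendsto (fun i => b i * a i) l (𝓝 0) ↔ Tendsto a l (𝓝 0) := by
  refine ⟨fun h => ?_, fun h => by simpa using hb.mul h⟩
  have h' := (hb.inv₀ hc).mul h
  rw [mul_zero] at h'
  exact h'.congr' ((hb.eventually_ne hc).mono fun i hi => inv_mul_cancel_left₀ hi _)

end RpowLimits

section StrictMonoRange

variable {α X : Type*} [LinearOrder α] [LinearOrder X] {F : α → X} {a b : X}

theorem StrictMono.range_eq_Ioo_of_tendsto [TopologicalSpace X] [OrderClosedTopology X]
    [Nonempty α] [NoMinOrder α] [NoMaxOrder α] [TopologicalSpace α] [PreconnectedSpace α]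
    (hF : StrictMono F) (hFc : Continuous F) (ha : Tendsto F atBot (𝓝 a))
    (hb : Tendsto F atTop (𝓝 b)) : range F = Ioo a b := by
  refine Subset.antisymm (range_subset_iff.2 fun x => ⟨?_, ?_⟩) fun u hu => ?_
  · obtain ⟨y, hy⟩ := exists_lt x
    exact (hF.monotone.le_of_tendsto ha y).trans_lt (hF hy)
  · obtain ⟨y, hy⟩ := exists_gt x
    exact (hF hy).trans_le (hF.monotone.ge_of_tendsto hb y)
  exact mem_range_of_exists_le_of_exists_ge hFc ((ha.eventually_lt_const hu.1).exists.imp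
    fun _ => le_of_lt) ((hb.eventually_const_lt hu.2).exists.imp fun _ => le_of_lt)

theorem StrictMono.exists_orderIso_Ioo (hF : StrictMono F) (hrange : range F = Ioo a b) :
    ∃ e : α ≃o Ioo a b, F = (↑) ∘ e := by
  have hmem (x : α) : F x ∈ Ioo a b := hrange ▸ mem_range_self x
  refine ⟨StrictMono.orderIsoOfSurjective (Set.codRestrict F _ hmem) hF fun u => ?_, rfl⟩
  obtain ⟨y, hy⟩ := hrange.ge u.2
  exact ⟨y, Subtype.ext hy⟩

variable [Nonempty α] [TopologicalSpace X] [OrderTopology X] [DenselyOrdered X]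

theorem StrictMono.map_atBot_eq_nhdsGT (hF : StrictMono F) (hrange : range F = Ioo a b) :
    map F atBot = 𝓝[>] a := by
  have hab : a < b := nonempty_Ioo.1 (hrange ▸ range_nonempty F)
  obtain ⟨e, rfl⟩ := hF.exists_orderIso_Ioo hrange
  rw [← map_map, e.map_atBot, map_coe_Ioo_atBot hab]

theorem StrictMono.map_atTop_eq_nhdsLT (hF : StrictMono F) (hrange : range F = Ioo a b) :
    map F atTop = 𝓝[<] b := by
  have hab : a < b := nonempty_Ioo.1 (hrange ▸ range_nonempty F)
  obtain ⟨e, rfl⟩ := hF.exists_orderIso_Ioo hrange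
  rw [← map_map, e.map_atTop, map_coe_Ioo_atTop hab]

end StrictMonoRange

theorem StrictMono.sInf_setOf_apply_le_apply {α β : Type*} [ConditionallyCompleteLinearOrder α]
    [Preorder β] {F : α → β} (hF : StrictMono F) (x : α) : sInf {y | F x ≤ F y} = x := by
  simp only [hF.le_iff_le]
  exact csInf_Ici

section QuantileTails

variable {F Q : ℝ → ℝ} {p : ℝ}

theorem tendsto_abs_rpow_mul_atBot_iff_quantile (hp : 0 < p) (hF : StrictMono F)
    (hrange : range F = Ioo 0 1) (hQ : Function.LeftInverse Q F) :
    Tendsto (fun x => |x| ^ p * F x) atBot (𝓝 0) ↔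
      Tendsto (fun u => u ^ (1 / p) * (1 - u) ^ (1 / p) * Q u) (𝓝[>] 0) (𝓝 0) := by
  have hweight : Tendsto (fun u : ℝ => (1 - u) ^ (1 / p)) (𝓝[>] 0) (𝓝 1) :=
    (((continuous_const.sub continuous_id).rpow_const fun _ => Or.inr (by positivity)).tendsto'
      0 1 (by simp)).mono_left nhdsWithin_le_nhds
  calc Tendsto (fun x => |x| ^ p * F x) atBot (𝓝 0)
      ↔ Tendsto (fun u => |Q u| ^ p * u) (𝓝[>] 0) (𝓝 0) := by
        rw [← hF.map_atBot_eq_nhdsGT hrange, tendsto_map'_iff, Function.comp_def]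
        simp only [hQ _]
    _ ↔ Tendsto (fun u => u ^ (1 / p) * Q u) (𝓝[>] 0) (𝓝 0) :=
        (tendsto_rpow_one_div_mul_iff_tendsto_abs_rpow_mul
          (eventually_mem_nhdsWithin.mono fun _ hu => le_of_lt hu) hp).symm
    _ ↔ Tendsto (fun u => (1 - u) ^ (1 / p) * (u ^ (1 / p) * Q u)) (𝓝[>] 0) (𝓝 0) :=
        (tendsto_mul_nhds_zero_iff_of_tendsto hweight one_ne_zero).symm
    _ ↔ _ := tendsto_congr fun u => by ring

theorem tendsto_abs_rpow_mul_one_sub_atTop_iff_quantile (hp : 0 < p) (hF : StrictMono F)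
    (hrange : range F = Ioo 0 1) (hQ : Function.LeftInverse Q F) :
    Tendsto (fun x => |x| ^ p * (1 - F x)) atTop (𝓝 0) ↔
      Tendsto (fun u => u ^ (1 / p) * (1 - u) ^ (1 / p) * Q u) (𝓝[<] 1) (𝓝 0) := by
  have hweight : Tendsto (fun u : ℝ => u ^ (1 / p)) (𝓝[<] 1) (𝓝 1) :=
    ((continuous_id.rpow_const fun _ => Or.inr (by positivity)).tendsto' 1 1 (by simp)).mono_left
      nhdsWithin_le_nhds
  calc Tendsto (fun x => |x| ^ p * (1 - F x)) atTop (𝓝 0)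
      ↔ Tendsto (fun u => |Q u| ^ p * (1 - u)) (𝓝[<] 1) (𝓝 0) := by
        rw [← hF.map_atTop_eq_nhdsLT hrange, tendsto_map'_iff, Function.comp_def]
        simp only [hQ _]
    _ ↔ Tendsto (fun u => (1 - u) ^ (1 / p) * Q u) (𝓝[<] 1) (𝓝 0) :=
        (tendsto_rpow_one_div_mul_iff_tendsto_abs_rpow_mul
          (eventually_mem_nhdsWithin.mono fun _ hu => sub_nonneg.2 (le_of_lt hu)) hp).symm
    _ ↔ Tendsto (fun u => u ^ (1 / p) * ((1 - u) ^ (1 / p) * Q u)) (𝓝[<] 1) (𝓝 0) :=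
        (tendsto_mul_nhds_zero_iff_of_tendsto hweight one_ne_zero).symm
    _ ↔ _ := tendsto_congr fun u => by ring

end QuantileTails

theorem stmt3 (μ : Measure ℝ) [IsProbabilityMeasure μ] (p : ℝ) (hp : 0 < p)
    (F : ℝ → ℝ) (hF : ∀ x, F x = (μ (Set.Iic x)).toReal)
    (hFc : Continuous F) (hFsm : StrictMono F)
    (Q : ℝ → ℝ) (hQ : ∀ u, Q u = sInf {x : ℝ | u ≤ F x}) :
    (Tendsto (fun x => |x| ^ p * F x) atBot (𝓝 0) ∧
        Tendsto (fun x => |x| ^ p * (1 - F x)) atTop (𝓝 0)) ↔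
      (Tendsto (fun u => u ^ (1 / p) * (1 - u) ^ (1 / p) * Q u) (𝓝[>] (0:ℝ)) (𝓝 0) ∧
        Tendsto (fun u => u ^ (1 / p) * (1 - u) ^ (1 / p) * Q u) (𝓝[<] (1:ℝ)) (𝓝 0)) := by
  have hcdf : F = ProbabilityTheory.cdf μ :=
    funext fun x => by rw [hF, ProbabilityTheory.cdf_eq_real, measureReal_def]
  have hrange : range F = Ioo 0 1 := hFsm.range_eq_Ioo_of_tendsto hFc
    (hcdf ▸ ProbabilityTheory.tendsto_cdf_atBot μ) (hcdf ▸ ProbabilityTheory.tendsto_cdf_atTop μ)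
  have hQF : Function.LeftInverse Q F := fun x => by
    rw [hQ, hFsm.sInf_setOf_apply_le_apply]
  rw [tendsto_abs_rpow_mul_atBot_iff_quantile hp hFsm hrange hQF,
    tendsto_abs_rpow_mul_one_sub_atTop_iff_quantile hp hFsm hrange hQF]
end

section
/- Let F be a cumulative distribution function on ℝ and suppose ∫ℝ |x|^{p−1} |F̃(x)| dx < ∞ where F̃(x) = F(x) − 1{x ≥ 0} and p > 0. Then |x|^p F(x) → 0 as x → −∞ and |x|^p (1−F(x)) → 0 as x → +∞. -/
open MeasureTheory Set Filter Topology

theorem stmt4 (μ : Measure ℝ) [IsProbabilityMeasure μ] (p : ℝ) (hp : 0 < p)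
    (F : ℝ → ℝ) (hF : ∀ x, F x = (μ (Set.Iic x)).toReal)
    (Ftil : ℝ → ℝ) (hFt : ∀ x, Ftil x = F x - if 0 ≤ x then 1 else 0)
    (hint : Integrable (fun x => |x| ^ (p - 1) * |Ftil x|)) :
    Tendsto (fun x => |x| ^ p * F x) atBot (𝓝 0) ∧
      Tendsto (fun x => |x| ^ p * (1 - F x)) atTop (𝓝 0) := by
  set g : ℝ → ℝ := fun x => |x| ^ (p - 1) * |Ftil x| with hg
  have hg0 : ∀ x, 0 ≤ g x := fun x =>
    mul_nonneg (Real.rpow_nonneg (abs_nonneg _) _) (abs_nonneg _)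
  have hF0 : ∀ x, 0 ≤ F x := fun x => (hF x) ▸ ENNReal.toReal_nonneg
  have hF1 : ∀ x, F x ≤ 1 := by
    intro x
    rw [hF x]
    exact (ENNReal.toReal_mono ENNReal.one_ne_top prob_le_one).trans_eq ENNReal.toReal_one
  have hFmono : Monotone F := by
    intro a b hab
    rw [hF a, hF b]
    exact ENNReal.toReal_mono (measure_ne_top μ _) (measure_mono (Iic_subset_Iic.2 hab))
  -- constant
  have hhalf : ((1:ℝ)/2) ^ p < 1 := Real.rpow_lt_one (by norm_num) (by norm_num) hp
  set c : ℝ := (1 - (1/2:ℝ) ^ p) / p with hcdef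
  have hc : 0 < c := div_pos (by linarith) hp
  -- tail integrals tend to zero
  have htail_bot : Tendsto (fun y : ℝ => ∫ t in Iic y, g t) atBot (𝓝 0) := by
    have h1 : Tendsto (fun a : ℝ => ∫ t in Iic (-a), g t) atTop
        (𝓝 (∫ t in ⋂ a : ℝ, Iic (-a), g t)) :=
      tendsto_setIntegral_of_antitone (fun _ => measurableSet_Iic)
        (fun a b hab => Iic_subset_Iic.2 (neg_le_neg hab)) ⟨0, hint.integrableOn⟩
    have h2 : (⋂ a : ℝ, Iic (-a)) = (∅ : Set ℝ) := by
      apply eq_empty_of_forall_notMem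
      intro x hx
      have := mem_iInter.1 hx (-(x - 1))
      simp only [mem_Iic, neg_neg] at this
      linarith
    rw [h2] at h1
    simp only [Measure.restrict_empty, integral_zero_measure] at h1
    have h3 := h1.comp tendsto_neg_atBot_atTop
    simpa only [Function.comp_def, neg_neg] using h3
  have htail_top : Tendsto (fun y : ℝ => ∫ t in Ici y, g t) atTop (𝓝 0) := by
    have h1 : Tendsto (fun a : ℝ => ∫ t in Ici a, g t) atTop
        (𝓝 (∫ t in ⋂ a : ℝ, Ici a, g t)) :=
      tendsto_setIntegral_of_antitone (fun _ => measurableSet_Ici)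
        (fun a b hab => Ici_subset_Ici.2 hab) ⟨0, hint.integrableOn⟩
    have h2 : (⋂ a : ℝ, Ici a) = (∅ : Set ℝ) := by
      apply eq_empty_of_forall_notMem
      intro x hx
      have := mem_iInter.1 hx (x + 1)
      simp only [mem_Ici] at this
      linarith
    rw [h2] at h1
    simpa using h1
  constructor
  · -- atBot side
    have key : ∀ x : ℝ, x ≤ -1 → |x| ^ p * F x * c ≤ ∫ t in Iic (x/2), g t := by
      intro x hx
      have hab : x ≤ x / 2 := by linarith
      have hb : x / 2 < 0 := by linarith
      have hI : (∫ t in x..(x/2), (-t) ^ (p-1)) = ((-x) ^ p - (-(x/2)) ^ p) / p := by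
        rw [intervalIntegral.integral_comp_neg (fun u => u ^ (p-1)),
          integral_rpow (Or.inl (by linarith))]
        have hpp : p - 1 + 1 = p := by ring
        rw [hpp]
      have hcont : ContinuousOn (fun t : ℝ => (-t) ^ (p-1)) (Set.uIcc x (x/2)) := by
        rw [uIcc_of_le hab]
        intro t ht
        have ht0 : t < 0 := lt_of_le_of_lt ht.2 hb
        exact ((Real.continuousAt_rpow_const (-t) (p-1)
          (Or.inl (by linarith))).comp (continuous_neg.continuousAt)).continuousWithinAt
      have hf1int : IntervalIntegrable (fun t : ℝ => F x * (-t) ^ (p-1)) volume x (x/2) :=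
        (hcont.intervalIntegrable).const_mul (F x)
      have hgint : IntervalIntegrable g volume x (x/2) := hint.intervalIntegrable
      have hmono : (∫ t in x..(x/2), F x * (-t) ^ (p-1)) ≤ ∫ t in x..(x/2), g t := by
        apply intervalIntegral.integral_mono_on hab hf1int hgint
        intro t ht
        have ht0 : t < 0 := lt_of_le_of_lt ht.2 hb
        have habs : |t| = -t := abs_of_neg ht0
        have hFt' : |Ftil t| = F t := by
          rw [hFt t, if_neg (not_le.2 ht0), sub_zero, abs_of_nonneg (hF0 t)]
        have h1 : F x * (-t) ^ (p-1) ≤ F t * (-t) ^ (p-1) :=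
          mul_le_mul_of_nonneg_right (hFmono ht.1) (Real.rpow_nonneg (by linarith) _)
        calc F x * (-t) ^ (p-1) ≤ F t * (-t) ^ (p-1) := h1
          _ = g t := by rw [hg]; simp only []; rw [habs, hFt']; ring
      have hsub : (∫ t in x..(x/2), g t) ≤ ∫ t in Iic (x/2), g t := by
        rw [intervalIntegral.integral_of_le hab]
        exact setIntegral_mono_set hint.integrableOn
          (Filter.Eventually.of_forall hg0)
          (HasSubset.Subset.eventuallyLE Ioc_subset_Iic_self)
      have hval : (∫ t in x..(x/2), F x * (-t) ^ (p-1)) = |x| ^ p * F x * c := by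
        rw [intervalIntegral.integral_const_mul, hI]
        have h2 : -(x/2) = (-x) * (1/2) := by ring
        rw [h2, Real.mul_rpow (by linarith) (by norm_num)]
        rw [abs_of_neg (by linarith : x < 0), hcdef]
        ring
      linarith
    have hupper : Tendsto (fun x : ℝ => (∫ t in Iic (x/2), g t) / c) atBot (𝓝 0) := by
      have h2 : Tendsto (fun x : ℝ => x / 2) atBot atBot :=
        tendsto_id.atBot_div_const (by norm_num)
      have := (htail_bot.comp h2).div_const c
      simpa [Function.comp] using this
    refine tendsto_of_tendsto_of_tendsto_of_le_of_le' tendsto_const_nhds hupper ?_ ?_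
    · exact Filter.Eventually.of_forall fun x =>
        mul_nonneg (Real.rpow_nonneg (abs_nonneg _) _) (hF0 x)
    · filter_upwards [eventually_le_atBot (-1 : ℝ)] with x hx
      rw [le_div_iff₀ hc]
      exact key x hx
  · -- atTop side
    have key : ∀ x : ℝ, 1 ≤ x → |x| ^ p * (1 - F x) * c ≤ ∫ t in Ici (x/2), g t := by
      intro x hx
      have hab : x / 2 ≤ x := by linarith
      have ha : 0 < x / 2 := by linarith
      have hI : (∫ t in (x/2)..x, t ^ (p-1)) = (x ^ p - (x/2) ^ p) / p := by
        rw [integral_rpow (Or.inl (by linarith))]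
        have hpp : p - 1 + 1 = p := by ring
        rw [hpp]
      have hcont : ContinuousOn (fun t : ℝ => t ^ (p-1)) (Set.uIcc (x/2) x) := by
        rw [uIcc_of_le hab]
        intro t ht
        have ht0 : 0 < t := lt_of_lt_of_le ha ht.1
        exact (Real.continuousAt_rpow_const t (p-1)
          (Or.inl (by linarith))).continuousWithinAt
      have hf1int : IntervalIntegrable (fun t : ℝ => (1 - F x) * t ^ (p-1)) volume (x/2) x :=
        (hcont.intervalIntegrable).const_mul (1 - F x)
      have hgint : IntervalIntegrable g volume (x/2) x := hint.intervalIntegrable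
      have hmono : (∫ t in (x/2)..x, (1 - F x) * t ^ (p-1)) ≤ ∫ t in (x/2)..x, g t := by
        apply intervalIntegral.integral_mono_on hab hf1int hgint
        intro t ht
        have ht0 : 0 < t := lt_of_lt_of_le ha ht.1
        have habs : |t| = t := abs_of_pos ht0
        have hFt' : |Ftil t| = 1 - F t := by
          rw [hFt t, if_pos (le_of_lt ht0), abs_of_nonpos (by linarith [hF1 t]), neg_sub]
        have h1 : (1 - F x) * t ^ (p-1) ≤ (1 - F t) * t ^ (p-1) :=
          mul_le_mul_of_nonneg_right (by linarith [hFmono ht.2]) (Real.rpow_nonneg (le_of_lt ht0) _)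
        calc (1 - F x) * t ^ (p-1) ≤ (1 - F t) * t ^ (p-1) := h1
          _ = g t := by rw [hg]; simp only []; rw [habs, hFt']; ring
      have hsub : (∫ t in (x/2)..x, g t) ≤ ∫ t in Ici (x/2), g t := by
        rw [intervalIntegral.integral_of_le hab]
        exact setIntegral_mono_set hint.integrableOn
          (Filter.Eventually.of_forall hg0)
          (HasSubset.Subset.eventuallyLE (Ioc_subset_Ioi_self.trans Ioi_subset_Ici_self))
      have hval : (∫ t in (x/2)..x, (1 - F x) * t ^ (p-1)) = |x| ^ p * (1 - F x) * c := by
        rw [intervalIntegral.integral_const_mul, hI]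
        have h2 : x/2 = x * (1/2) := by ring
        rw [h2, Real.mul_rpow (by linarith) (by norm_num)]
        rw [abs_of_pos (by linarith : (0:ℝ) < x), hcdef]
        ring
      linarith
    have hupper : Tendsto (fun x : ℝ => (∫ t in Ici (x/2), g t) / c) atTop (𝓝 0) := by
      have h2 : Tendsto (fun x : ℝ => x / 2) atTop atTop :=
        tendsto_id.atTop_div_const (by norm_num)
      have := (htail_top.comp h2).div_const c
      simpa [Function.comp] using this
    refine tendsto_of_tendsto_of_tendsto_of_le_of_le' tendsto_const_nhds hupper ?_ ?_
    · filter_upwards [eventually_ge_atTop (1 : ℝ)] with x hx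
      exact mul_nonneg (Real.rpow_nonneg (abs_nonneg _) _) (by linarith [hF1 x])
    · filter_upwards [eventually_ge_atTop (1 : ℝ)] with x hx
      rw [le_div_iff₀ hc]
      exact key x hx
end

section
/- Let A, B : (0,1) → ℝ be functions such that for all u₁ ≥ u₂ in (0,1), A(u₁) − A(u₂) ≥ B(u₁) − B(u₂) ≥ 0, and the range of A contains (0,1). Define A⁻¹(v) = inf{u : A(u) ≥ v}. Then B ∘ A⁻¹ is monotone nondecreasing on (0,1) and satisfies |B(A⁻¹(v₁)) − B(A⁻¹(v₂))| ≤ |v₁ − v₂| for all v₁, v₂ ∈ (0,1), i.e., B ∘ A⁻¹ is 1-Lipschitz. -/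
open MeasureTheory Set Filter Topology

theorem stmt7 (A B : ℝ → ℝ)
    (hAcont : ContinuousOn A (Set.Ioo 0 1))
    (hdom : ∀ u₁ ∈ Set.Ioo (0:ℝ) 1, ∀ u₂ ∈ Set.Ioo (0:ℝ) 1, u₂ ≤ u₁ →
      0 ≤ B u₁ - B u₂ ∧ B u₁ - B u₂ ≤ A u₁ - A u₂)
    (hrange : Set.Ioo (0:ℝ) 1 ⊆ A '' Set.Ioo 0 1)
    (Ainv : ℝ → ℝ)
    (hAinv : ∀ v, Ainv v = sInf {u : ℝ | u ∈ Set.Ioo (0:ℝ) 1 ∧ v ≤ A u}) :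
    (∀ v₁ ∈ Set.Ioo (0:ℝ) 1, ∀ v₂ ∈ Set.Ioo (0:ℝ) 1, v₁ ≤ v₂ →
        B (Ainv v₁) ≤ B (Ainv v₂)) ∧
    (∀ v₁ ∈ Set.Ioo (0:ℝ) 1, ∀ v₂ ∈ Set.Ioo (0:ℝ) 1,
        |B (Ainv v₁) - B (Ainv v₂)| ≤ |v₁ - v₂|) := by
  have hmono : ∀ u₁ ∈ Set.Ioo (0:ℝ) 1, ∀ u₂ ∈ Set.Ioo (0:ℝ) 1, u₂ ≤ u₁ → A u₂ ≤ A u₁ := by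
    intro u₁ h1 u₂ h2 h
    have h' := hdom u₁ h1 u₂ h2 h
    linarith [h'.1, h'.2]
  -- key: Ainv v ∈ (0,1) and A (Ainv v) = v
  have key : ∀ v ∈ Set.Ioo (0:ℝ) 1, Ainv v ∈ Set.Ioo (0:ℝ) 1 ∧ A (Ainv v) = v := by
    intro v hv
    obtain ⟨x, hx, hAx⟩ := hrange hv
    have hv2 : v/2 ∈ Set.Ioo (0:ℝ) 1 := ⟨by linarith [hv.1], by linarith [hv.1, hv.2]⟩
    obtain ⟨u₀, hu₀, hAu₀⟩ := hrange hv2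
    set s := {u : ℝ | u ∈ Set.Ioo (0:ℝ) 1 ∧ v ≤ A u} with hs
    have hxs : x ∈ s := ⟨hx, le_of_eq hAx.symm⟩
    have hne : s.Nonempty := ⟨x, hxs⟩
    have hlb : ∀ u ∈ s, u₀ ≤ u := by
      intro u hu
      by_contra h
      push_neg at h
      have h1 : A u ≤ A u₀ := hmono u₀ hu₀ u hu.1 h.le
      rw [hAu₀] at h1
      have := hu.2
      linarith [hv.1]
    have hbdd : BddBelow s := ⟨u₀, hlb⟩
    have hAv : Ainv v = sInf s := hAinv v
    have hm0 : u₀ ≤ Ainv v := hAv ▸ le_csInf hne hlb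
    have hm1 : Ainv v ≤ x := hAv ▸ csInf_le hbdd hxs
    have hmIoo : Ainv v ∈ Set.Ioo (0:ℝ) 1 := ⟨lt_of_lt_of_le hu₀.1 hm0, lt_of_le_of_lt hm1 hx.2⟩
    refine ⟨hmIoo, ?_⟩
    have hcont := hAcont _ hmIoo
    rw [Metric.continuousWithinAt_iff] at hcont
    -- v ≤ A (Ainv v)
    have hge : v ≤ A (Ainv v) := by
      by_contra h
      push_neg at h
      obtain ⟨δ, hδ, hδ'⟩ := hcont (v - A (Ainv v)) (by linarith)
      obtain ⟨u, hus, hu⟩ := Real.lt_sInf_add_pos hne hδ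
      have hum : Ainv v ≤ u := hAv ▸ csInf_le hbdd hus
      have hdist : dist u (Ainv v) < δ := by
        rw [Real.dist_eq, abs_of_nonneg (by linarith)]
        rw [hAv]; linarith [hAv ▸ hu]
      have := hδ' hus.1 hdist
      rw [Real.dist_eq] at this
      have := abs_lt.mp this
      linarith [hus.2]
    -- A (Ainv v) ≤ v
    have hle : A (Ainv v) ≤ v := by
      by_contra h
      push_neg at h
      have hmu₀ : u₀ < Ainv v := by
        rcases lt_or_eq_of_le hm0 with h' | h'
        · exact h'
        · rw [← h'] at h; rw [hAu₀] at h; linarith [hv.1]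
      obtain ⟨δ, hδ, hδ'⟩ := hcont (A (Ainv v) - v) (by linarith)
      set u := max (Ainv v - δ/2) ((u₀ + Ainv v)/2) with hu
      have hu1 : u < Ainv v := by
        apply max_lt <;> [linarith; linarith]
      have huIoo : u ∈ Set.Ioo (0:ℝ) 1 := by
        constructor
        · have : (0:ℝ) < (u₀ + Ainv v)/2 := by linarith [hu₀.1, hmIoo.1]
          exact lt_of_lt_of_le this (le_max_right _ _)
        · exact lt_trans hu1 hmIoo.2
      have hdist : dist u (Ainv v) < δ := by
        rw [Real.dist_eq, abs_of_nonpos (by linarith)]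
        have : Ainv v - δ/2 ≤ u := le_max_left _ _
        linarith
      have h2 := hδ' huIoo hdist
      rw [Real.dist_eq] at h2
      have h3 := abs_lt.mp h2
      have hus : u ∈ s := ⟨huIoo, by linarith⟩
      have : Ainv v ≤ u := hAv ▸ csInf_le hbdd hus
      linarith
    linarith
  -- Ainv is monotone
  have hAinvmono : ∀ v₁ ∈ Set.Ioo (0:ℝ) 1, ∀ v₂ ∈ Set.Ioo (0:ℝ) 1, v₁ ≤ v₂ →
      Ainv v₁ ≤ Ainv v₂ := by
    intro v₁ hv₁ v₂ hv₂ h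
    rw [hAinv v₁, hAinv v₂]
    obtain ⟨x, hx, hAx⟩ := hrange hv₂
    refine csInf_le_csInf ⟨0, fun u hu => hu.1.1.le⟩ ⟨x, hx, le_of_eq hAx.symm⟩ ?_
    intro u hu
    exact ⟨hu.1, le_trans h hu.2⟩
  have hBmono : ∀ v₁ ∈ Set.Ioo (0:ℝ) 1, ∀ v₂ ∈ Set.Ioo (0:ℝ) 1, v₁ ≤ v₂ →
      B (Ainv v₁) ≤ B (Ainv v₂) ∧ B (Ainv v₂) - B (Ainv v₁) ≤ v₂ - v₁ := by
    intro v₁ hv₁ v₂ hv₂ h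
    obtain ⟨hm₁, hA₁⟩ := key v₁ hv₁
    obtain ⟨hm₂, hA₂⟩ := key v₂ hv₂
    have h' := hdom (Ainv v₂) hm₂ (Ainv v₁) hm₁ (hAinvmono v₁ hv₁ v₂ hv₂ h)
    constructor
    · linarith [h'.1]
    · rw [hA₁, hA₂] at h'
      linarith [h'.2]
  refine ⟨fun v₁ hv₁ v₂ hv₂ h => (hBmono v₁ hv₁ v₂ hv₂ h).1, ?_⟩
  intro v₁ hv₁ v₂ hv₂
  rcases le_total v₁ v₂ with h | h
  · obtain ⟨h1, h2⟩ := hBmono v₁ hv₁ v₂ hv₂ h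
    rw [abs_of_nonpos (by linarith), abs_of_nonpos (by linarith)]
    linarith
  · obtain ⟨h1, h2⟩ := hBmono v₂ hv₂ v₁ hv₁ h
    rw [abs_of_nonneg (by linarith), abs_of_nonneg (by linarith)]
    linarith
end

section
/- Let A_t, B_t, B : (0,1) → ℝ with A_t(u₁) − A_t(u₂) ≥ B_t(u₁) − B_t(u₂) ≥ 0 for all u₁ ≥ u₂, and suppose the range of A_t contains (0,1). Let I denote the identity map on (0,1). Then for every u ∈ (0,1), |B_t(A_t⁻¹(u)) − B(u)| ≤ |A_t(u) − u| + |B_t(u) − B(u)|, where A_t⁻¹(v) = inf{s : A_t(s) ≥ v}. -/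
open MeasureTheory Set Filter Topology

theorem stmt8 (At Bt B : ℝ → ℝ)
    (hAcont : ContinuousOn At (Set.Ioo 0 1))
    (hdom : ∀ u₁ ∈ Set.Ioo (0:ℝ) 1, ∀ u₂ ∈ Set.Ioo (0:ℝ) 1, u₂ ≤ u₁ →
      0 ≤ Bt u₁ - Bt u₂ ∧ Bt u₁ - Bt u₂ ≤ At u₁ - At u₂)
    (hrange : Set.Ioo (0:ℝ) 1 ⊆ At '' Set.Ioo 0 1)
    (Atinv : ℝ → ℝ)
    (hAtinv : ∀ v, Atinv v = sInf {s : ℝ | s ∈ Set.Ioo (0:ℝ) 1 ∧ v ≤ At s}) :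
    ∀ u ∈ Set.Ioo (0:ℝ) 1,
      |Bt (Atinv u) - B u| ≤ |At u - u| + |Bt u - B u| := by
  intro u hu
  have hmono : ∀ a ∈ Set.Ioo (0:ℝ) 1, ∀ b ∈ Set.Ioo (0:ℝ) 1, a ≤ b → At a ≤ At b := by
    intro a ha b hb hab
    have h := hdom b hb a ha hab
    linarith [h.1, h.2]
  obtain ⟨s₂, hs₂, hAs₂⟩ := hrange hu
  have hu2 : u / 2 ∈ Set.Ioo (0:ℝ) 1 := ⟨by linarith [hu.1], by linarith [hu.1, hu.2]⟩
  obtain ⟨s₁, hs₁, hAs₁⟩ := hrange hu2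
  set S := {s : ℝ | s ∈ Set.Ioo (0:ℝ) 1 ∧ u ≤ At s} with hS
  have hs₂S : s₂ ∈ S := ⟨hs₂, hAs₂.ge⟩
  have hlb : ∀ s ∈ S, s₁ ≤ s := by
    intro s hs
    by_contra h
    push_neg at h
    have := hmono s hs.1 s₁ hs₁ h.le
    have : At s ≤ u / 2 := by rw [hAs₁] at this; exact this
    have := hs.2
    linarith [hu.1]
  have hbdd : BddBelow S := ⟨s₁, hlb⟩
  have hne : S.Nonempty := ⟨s₂, hs₂S⟩
  set w := sInf S with hw
  have hw1 : s₁ ≤ w := le_csInf hne hlb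
  have hw2 : w ≤ s₂ := csInf_le hbdd hs₂S
  have hwIoo : w ∈ Set.Ioo (0:ℝ) 1 := ⟨lt_of_lt_of_le hs₁.1 hw1, lt_of_le_of_lt hw2 hs₂.2⟩
  have h1 : At w ≤ u := by
    have := hmono w hwIoo s₂ hs₂ hw2
    rwa [hAs₂] at this
  obtain ⟨seq, hanti, hseqt, hseqS⟩ := exists_seq_tendsto_sInf hne hbdd
  have hcw : ContinuousWithinAt At (Set.Ioo 0 1) w := hAcont w hwIoo
  have htend : Tendsto (fun n => At (seq n)) atTop (𝓝 (At w)) := by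
    apply hcw.tendsto.comp
    apply tendsto_nhdsWithin_of_tendsto_nhds_of_eventually_within _ hseqt
    exact Filter.Eventually.of_forall fun n => (hseqS n).1
  have h2 : u ≤ At w := ge_of_tendsto htend (Filter.Eventually.of_forall fun n => (hseqS n).2)
  have hAw : At w = u := le_antisymm h1 h2
  have key : |Bt w - Bt u| ≤ |At u - u| := by
    rcases le_total w u with hwu | hwu
    · have h := hdom u hu w hwIoo hwu
      rw [abs_sub_comm]
      rw [abs_of_nonneg h.1]
      calc Bt u - Bt w ≤ At u - At w := h.2
        _ = At u - u := by rw [hAw]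
        _ ≤ |At u - u| := le_abs_self _
    · have h := hdom w hwIoo u hu hwu
      rw [abs_of_nonneg h.1]
      calc Bt w - Bt u ≤ At w - At u := h.2
        _ = -(At u - u) := by rw [hAw]; ring
        _ ≤ |At u - u| := neg_le_abs _
  have : Atinv u = w := hAtinv u
  rw [this]
  calc |Bt w - B u| ≤ |Bt w - Bt u| + |Bt u - B u| := abs_sub_le _ _ _
    _ ≤ |At u - u| + |Bt u - B u| := by linarith [key]
end

section
/- Let Q : (0,1) → ℝ be a nondecreasing function with Q ∈ L_{2+c}(0,1) for some c > 0, and let r satisfy 1/(2+c) < r < 1. Then ∫₀¹ u^r (1−u)^r dQ(u) < ∞ (the Lebesgue–Stieltjes integral with respect to dQ is finite). -/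
/-!
Since `u ^ r * (1 - u) ^ r ≤ min u (1 - u) ^ r`, the layer-cake formula bounds the integral by
`∫₀¹ r t ^ (r - 1) dQ((t, 1 - t)) dt ≤ ∫₀¹ r t ^ (r - 1) (Q (1 - t) - Q t) dt`. Both
`t ^ (r - 1) Q t` and `t ^ (r - 1) Q (1 - t)` are integrable by Hölder's inequality: `Q` and its
reflection lie in `L^(2 + c)`, and `t ^ (r - 1)` lies in the conjugate space
`L^((2 + c) / (1 + c))` exactly when `r > 1 / (2 + c)`.
-/

open MeasureTheory Set Filter Topology
open scoped ENNReal

theorem integrableOn_rpow_mul_of_integrableOn_abs_rpow {f : ℝ → ℝ} {p a b : ℝ} (hb : 0 < b)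
    (hp : 1 < p) (hf : AEStronglyMeasurable f (volume.restrict (Ioo 0 b)))
    (hfp : IntegrableOn (fun t => |f t| ^ p) (Ioo 0 b)) (ha : 1 / p - 1 < a) :
    IntegrableOn (fun t => t ^ a * f t) (Ioo 0 b) := by
  set q := p / (p - 1)
  have hpq : p.HolderConjugate q := (Real.holderConjugate_iff_eq_conjExponent hp).2 rfl
  have := hpq.symm.ennrealOfReal
  have hfLp : MemLp f (ENNReal.ofReal p) (volume.restrict (Ioo 0 b)) := by
    rw [← integrable_norm_rpow_iff hf (by simp [hpq.pos]) ENNReal.ofReal_ne_top,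
      ENNReal.toReal_ofReal hpq.nonneg]
    exact hfp
  have hgLp : MemLp (fun t : ℝ => t ^ a) (ENNReal.ofReal q) (volume.restrict (Ioo 0 b)) := by
    rw [← integrable_norm_rpow_iff (by fun_prop) (by simp [hpq.symm.pos]) ENNReal.ofReal_ne_top,
      ENNReal.toReal_ofReal hpq.symm.nonneg]
    have hint : IntegrableOn (fun t : ℝ => t ^ (a * q)) (Ioo 0 b) := by
      rw [intervalIntegral.integrableOn_Ioo_rpow_iff hb]
      have h1 : 1 / p - 1 = -q⁻¹ := by linarith [one_div p, hpq.inv_add_inv_eq_one]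
      have h2 := mul_lt_mul_of_pos_right ha hpq.symm.pos
      rwa [h1, neg_mul, inv_mul_cancel₀ hpq.symm.ne_zero] at h2
    refine hint.congr_fun (fun t ht => ?_) measurableSet_Ioo
    rw [Real.norm_eq_abs, abs_of_pos (Real.rpow_pos_of_pos ht.1 a), ← Real.rpow_mul ht.1.le]
  exact hgLp.integrable_mul hfLp

theorem integrableOn_Ioo_zero_one_comp_one_sub {E : Type*} [NormedAddCommGroup E] {f : ℝ → E}
    (hf : IntegrableOn f (Ioo 0 1)) : IntegrableOn (fun t => f (1 - t)) (Ioo 0 1) := by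
  rw [← intervalIntegrable_iff_integrableOn_Ioo_of_le zero_le_one] at hf ⊢
  simpa using (hf.comp_sub_left 1).symm

theorem integral_mul_rpow_sub_one {r : ℝ} (hr : 0 < r) (x : ℝ) :
    ∫ t in 0..x, r * t ^ (r - 1) = x ^ r := by
  rw [intervalIntegral.integral_const_mul, integral_rpow (Or.inl (by linarith)), sub_add_cancel,
    Real.zero_rpow hr.ne', sub_zero, mul_div_cancel₀ _ hr.ne']

theorem rpow_mul_one_sub_rpow_le_min_rpow {u r : ℝ} (hu0 : 0 ≤ u) (hu1 : u ≤ 1) (hr : 0 ≤ r) :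
    u ^ r * (1 - u) ^ r ≤ min u (1 - u) ^ r := by
  rw [← Real.mul_rpow hu0 (by linarith)]
  exact Real.rpow_le_rpow (by nlinarith) (le_min (by nlinarith) (by nlinarith)) hr

namespace StieltjesFunction

theorem measure_Ioo_le (Q : StieltjesFunction ℝ) (a b : ℝ) :
    Q.measure (Ioo a b) ≤ ENNReal.ofReal (Q b - Q a) :=
  (measure_mono Ioo_subset_Ioc_self).trans_eq (Q.measure_Ioc a b)

theorem lintegral_min_one_sub_rpow_le (Q : StieltjesFunction ℝ) {r : ℝ} (hr : 0 < r) :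
    ∫⁻ u in Ioo 0 1, ENNReal.ofReal (min u (1 - u) ^ r) ∂Q.measure ≤
      ∫⁻ t in Ioo 0 1, ENNReal.ofReal (r * t ^ (r - 1) * (Q (1 - t) - Q t)) := by
  have hmin_nonneg : ∀ᵐ u ∂Q.measure.restrict (Ioo 0 1), (0 : ℝ) ≤ min u (1 - u) :=
    ae_restrict_of_forall_mem measurableSet_Ioo fun u hu => le_min hu.1.le (by linarith [hu.2])
  have layer := lintegral_comp_eq_lintegral_meas_lt_mul (Q.measure.restrict (Ioo 0 1))
    (g := fun t => r * t ^ (r - 1)) hmin_nonneg (by fun_prop)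
    (fun t _ => (intervalIntegral.intervalIntegrable_rpow' (by linarith)).const_mul r)
    (ae_restrict_of_forall_mem _root_.measurableSet_Ioi fun t (ht : 0 < t) => by positivity)
  simp only [integral_mul_rpow_sub_one hr] at layer
  calc _ = _ := layer
    _ ≤ ∫⁻ t in Ioi 0, (Ioo 0 1).indicator
          (fun t => ENNReal.ofReal (r * t ^ (r - 1) * (Q (1 - t) - Q t))) t := by
      refine setLIntegral_mono' _root_.measurableSet_Ioi fun t (ht : 0 < t) => ?_
      have hlayer : {u : ℝ | t < min u (1 - u)} = Ioo t (1 - t) := by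
        ext u; simp [lt_sub_comm]
      have hμ : Q.measure.restrict (Ioo 0 1) {u | t < min u (1 - u)} ≤
          ENNReal.ofReal (Q (1 - t) - Q t) :=
        (Measure.restrict_apply_le _ _).trans (hlayer ▸ Q.measure_Ioo_le _ _)
      by_cases h1 : t < 1
      · rw [indicator_of_mem (show t ∈ Ioo 0 1 from ⟨ht, h1⟩), mul_comm (r * _),
          ENNReal.ofReal_mul' (q := r * t ^ (r - 1)) (by positivity)]
        gcongr
      · rw [ENNReal.ofReal_of_nonpos (sub_nonpos.2 (Q.mono (by linarith)))] at hμ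
        rw [nonpos_iff_eq_zero.1 hμ, zero_mul]
        exact zero_le
    _ = _ := by
      rw [setLIntegral_indicator measurableSet_Ioo, inter_eq_left.2 Ioo_subset_Ioi_self]

end StieltjesFunction

theorem stmt9_general (Q : StieltjesFunction ℝ) (c : ℝ) (hc : 0 < c)
    (hQint : IntegrableOn (fun u => |Q u| ^ (2 + c)) (Set.Ioo 0 1))
    (r : ℝ) (hr1 : 1 / (2 + c) < r) :
    (∫⁻ u in Set.Ioo (0:ℝ) 1, ENNReal.ofReal (u ^ r * (1 - u) ^ r) ∂Q.measure) < ⊤ := by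
  have hr : 0 < r := lt_trans (by positivity) hr1
  have hp : 1 < 2 + c := by linarith
  have ha : 1 / (2 + c) - 1 < r - 1 := by linarith
  have hQ : Measurable Q := Q.mono.measurable
  have hint : IntegrableOn (fun t => r * t ^ (r - 1) * (Q (1 - t) - Q t)) (Ioo 0 1) := by
    have h1 := integrableOn_rpow_mul_of_integrableOn_abs_rpow (f := fun t => Q (1 - t)) one_pos hp
      (hQ.comp (measurable_const.sub measurable_id)).aestronglyMeasurable
      (integrableOn_Ioo_zero_one_comp_one_sub hQint) ha
    have h2 := integrableOn_rpow_mul_of_integrableOn_abs_rpow one_pos hp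
      hQ.aestronglyMeasurable hQint ha
    exact IntegrableOn.congr_fun ((h1.sub h2).const_mul r)
      (fun t _ => by simp only [Pi.sub_apply]; ring) measurableSet_Ioo
  calc _ ≤ ∫⁻ u in Ioo 0 1, ENNReal.ofReal (min u (1 - u) ^ r) ∂Q.measure :=
        setLIntegral_mono' measurableSet_Ioo fun u hu => ENNReal.ofReal_le_ofReal
          (rpow_mul_one_sub_rpow_le_min_rpow hu.1.le hu.2.le hr.le)
    _ ≤ _ := Q.lintegral_min_one_sub_rpow_le hr
    _ < ⊤ := hint.lintegral_lt_top

theorem stmt9 (Q : StieltjesFunction ℝ) (c : ℝ) (hc : 0 < c)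
    (hQint : IntegrableOn (fun u => |Q u| ^ (2 + c)) (Set.Ioo 0 1))
    (r : ℝ) (hr1 : 1 / (2 + c) < r) (hr2 : r < 1) :
    (∫⁻ u in Set.Ioo (0:ℝ) 1, ENNReal.ofReal (u ^ r * (1 - u) ^ r) ∂Q.measure) < ⊤ :=
  stmt9_general Q c hc hQint r hr1
end

section
/- Let F be a continuous strictly increasing CDF on ℝ with finite first moment, and let F_t = F + t·z_t where z_t : ℝ → ℝ are uniformly bounded functions with sup_x |z_t(x)| ≤ C. Then for every ε ∈ (0, 1/4) and |t| small, ∫₀^{2ε} |F_t⁻¹(u) − F⁻¹(u)| du ≤ |t| · ∫_{−∞}^{F⁻¹(2ε + |t| C)} |z_t(x)| dx, where F⁻¹ and F_t⁻¹ are generalized inverses. -/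
open MeasureTheory Set Filter Topology
open scoped ENNReal

theorem stmt13 (μ : Measure ℝ) [IsProbabilityMeasure μ]
    (F : ℝ → ℝ) (hF : ∀ x, F x = (μ (Set.Iic x)).toReal)
    (hFc : Continuous F) (hFsm : StrictMono F)
    (hmom : Integrable (fun x => |x|) μ)
    (C : ℝ) (hC : 0 ≤ C) (z : ℝ → ℝ → ℝ) (hz : ∀ t x, |z t x| ≤ C)
    (Ft : ℝ → ℝ → ℝ) (hFt : ∀ t x, Ft t x = F x + t * z t x)
    (hFtmono : ∀ t, Monotone (Ft t))
    (Ginv : (ℝ → ℝ) → ℝ → ℝ) (hGinv : ∀ G u, Ginv G u = sInf {x : ℝ | u ≤ G x})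
    (ε : ℝ) (hε : ε ∈ Set.Ioo (0:ℝ) (1/4)) :
    ∃ δ > 0, ∀ t : ℝ, |t| < δ →
      (∫⁻ u in Set.Ioo (0:ℝ) (2 * ε), ENNReal.ofReal |Ginv (Ft t) u - Ginv F u|) ≤
        ENNReal.ofReal |t| *
          ∫⁻ x in Set.Iic (Ginv F (2 * ε + |t| * C)), ENNReal.ofReal |z t x| := by
  obtain ⟨hε0, hε4⟩ := hε
  have hC1 : (0:ℝ) < C + 1 := by linarith
  refine ⟨(1 - 2*ε)/(C+1), div_pos (by linarith) hC1, ?_⟩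
  intro t ht
  -- surjectivity of F onto (0,1)
  have hsurj : ∀ v : ℝ, 0 < v → v < 1 → ∃ x, F x = v := by
    intro v hv0 hv1
    have h1 : ∃ x1 : ℝ, F x1 < v := by
      have hT : Tendsto (μ ∘ fun n : ℕ => Iic (-(n:ℝ))) atTop (𝓝 (μ (⋂ n : ℕ, Iic (-(n:ℝ))))) := by
        refine tendsto_measure_iInter_atTop (fun n => measurableSet_Iic.nullMeasurableSet) ?_ ⟨0, measure_ne_top _ _⟩
        intro n m hnm x hx
        simp only [mem_Iic] at hx ⊢
        have : (n:ℝ) ≤ m := Nat.cast_le.2 hnm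
        linarith
      have hempty : (⋂ n : ℕ, Iic (-(n:ℝ))) = ∅ := by
        ext x
        simp only [mem_iInter, mem_Iic, mem_empty_iff_false, iff_false, not_forall, not_le]
        obtain ⟨n, hn⟩ := exists_nat_gt (-x)
        exact ⟨n, by linarith⟩
      rw [hempty, measure_empty] at hT
      have hvpos : (0:ℝ≥0∞) < ENNReal.ofReal v := ENNReal.ofReal_pos.2 hv0
      obtain ⟨n, hn⟩ := (hT.eventually_lt_const hvpos).exists
      exact ⟨-(n:ℝ), by rw [hF]; exact ENNReal.toReal_lt_of_lt_ofReal hn⟩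
    have h2 : ∃ x2 : ℝ, v < F x2 := by
      have hT : Tendsto (fun x : ℝ => μ (Iic x)) atTop (𝓝 (μ univ)) :=
        tendsto_measure_Iic_atTop μ
      rw [measure_univ] at hT
      have hv1' : ENNReal.ofReal v < 1 := by
        rw [← ENNReal.ofReal_one]
        exact ENNReal.ofReal_lt_ofReal_iff_of_nonneg hv0.le |>.2 hv1
      obtain ⟨x2, hx2⟩ := (hT.eventually_const_lt hv1').exists
      refine ⟨x2, ?_⟩
      rw [hF]
      exact (ENNReal.ofReal_lt_iff_lt_toReal hv0.le (measure_ne_top _ _)).1 hx2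
    obtain ⟨x1, hx1⟩ := h1
    obtain ⟨x2, hx2⟩ := h2
    have hx12 : x1 ≤ x2 := (hFsm.lt_iff_lt.1 (by linarith)).le
    have := intermediate_value_Icc hx12 hFc.continuousOn
    obtain ⟨x, _, hx⟩ := this ⟨hx1.le, hx2.le⟩
    exact ⟨x, hx⟩
  -- the quantile of a continuous strictly monotone F
  have hq : ∀ (v x0 : ℝ), F x0 = v → sInf {x : ℝ | v ≤ F x} = x0 := by
    intro v x0 hx0
    have hset : {x : ℝ | v ≤ F x} = Ici x0 := by
      ext x
      simp only [mem_setOf_eq, mem_Ici, ← hx0]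
      exact ⟨fun h => hFsm.le_iff_le.1 h, fun h => hFsm.monotone h⟩
    rw [hset, csInf_Ici]
  set c : ℝ := |t| * C with hcdef
  have hc0 : 0 ≤ c := mul_nonneg (abs_nonneg t) hC
  have hc1 : 2*ε + c < 1 := by
    have h1 : c ≤ |t| * (C + 1) := by nlinarith [abs_nonneg t]
    have h2 : |t| * (C + 1) < 1 - 2*ε := by
      rw [← div_mul_cancel₀ (1 - 2*ε) (ne_of_gt hC1)]
      exact mul_lt_mul_of_pos_right ht hC1
    linarith
  obtain ⟨xa, hxa⟩ := hsurj (2*ε + c) (by linarith) hc1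
  have ha : Ginv F (2 * ε + |t| * C) = xa := by rw [hGinv]; exact hq _ _ hxa
  rw [ha]
  by_cases hRfin : ENNReal.ofReal |t| * ∫⁻ x in Set.Iic xa, ENNReal.ofReal |z t x| = ⊤
  · rw [hRfin]; exact le_top
  -- In the main case every sublevel set is bounded below
  have hbdd : ∀ u : ℝ, 0 < u → u < 2*ε → BddBelow {x : ℝ | u ≤ Ft t x} := by
    intro u hu0 hu2
    by_contra hnb
    have huniv : ∀ y : ℝ, u ≤ Ft t y := by
      intro y
      obtain ⟨w, hw, hwy⟩ := not_bddBelow_iff.1 hnb y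
      exact le_trans hw (hFtmono t hwy.le)
    obtain ⟨b, hb⟩ := hsurj (u/2) (by linarith) (by linarith)
    have ht0 : t ≠ 0 := by
      rintro rfl
      have h1 := huniv (b - 1)
      rw [hFt] at h1
      have h2 : F (b-1) < F b := hFsm (by linarith)
      rw [hb] at h2
      simp only [zero_mul, add_zero] at h1
      linarith
    have htpos : 0 < |t| := abs_pos.2 ht0
    have hzlb : ∀ y : ℝ, y < b → u / (2*|t|) ≤ |z t y| := by
      intro y hy
      have h1 : u ≤ F y + t * z t y := by rw [← hFt]; exact huniv y
      have h2 : F y < u/2 := by rw [← hb]; exact hFsm hy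
      have h3 : u/2 ≤ t * z t y := by linarith
      have h4 : t * z t y ≤ |t| * |z t y| := by
        calc t * z t y ≤ |t * z t y| := le_abs_self _
        _ = |t| * |z t y| := abs_mul _ _
      rw [div_le_iff₀ (by positivity)]
      nlinarith
    set m : ℝ := min xa (b - 1) with hmdef
    have hinf : ∫⁻ x in Set.Iic xa, ENNReal.ofReal |z t x| = ⊤ := by
      have hle1 : ∫⁻ x in Set.Iic m, ENNReal.ofReal (u/(2*|t|))
          ≤ ∫⁻ x in Set.Iic m, ENNReal.ofReal |z t x| := by
        refine lintegral_mono_ae ((ae_restrict_iff' measurableSet_Iic).2 (ae_of_all _ ?_))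
        intro x hx
        refine ENNReal.ofReal_le_ofReal (hzlb x ?_)
        have : x ≤ b - 1 := le_trans hx (min_le_right _ _)
        linarith
      have hle2 : ∫⁻ x in Set.Iic m, ENNReal.ofReal |z t x|
          ≤ ∫⁻ x in Set.Iic xa, ENNReal.ofReal |z t x| :=
        lintegral_mono_set (Iic_subset_Iic.2 (min_le_left _ _))
      have hconst : ∫⁻ x in Set.Iic m, ENNReal.ofReal (u/(2*|t|)) = ⊤ := by
        rw [setLIntegral_const, Real.volume_Iic, ENNReal.mul_top]
        exact ne_of_gt (ENNReal.ofReal_pos.2 (by positivity))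
      exact top_unique (hconst ▸ le_trans hle1 hle2)
    exact hRfin (by rw [hinf, ENNReal.mul_top (by simpa using ne_of_gt (ENNReal.ofReal_pos.2 (abs_pos.2 ht0)))])
  -- the key product set
  set T : Set (ℝ × ℝ) := {p : ℝ × ℝ | p.1 ∈ Ioo (0:ℝ) (2*ε) ∧ p.2 ≤ xa ∧
      min (F p.2) (Ft t p.2) < p.1 ∧ p.1 ≤ max (F p.2) (Ft t p.2)} with hTdef
  have hmF : Measurable F := hFc.measurable
  have hmFt : Measurable (Ft t) := (hFtmono t).measurable
  have hT : MeasurableSet T := by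
    have h1 : MeasurableSet {p : ℝ×ℝ | p.1 ∈ Ioo (0:ℝ) (2*ε)} :=
      measurable_fst measurableSet_Ioo
    have h2 : MeasurableSet {p : ℝ×ℝ | p.2 ≤ xa} := measurable_snd measurableSet_Iic
    have h3 : MeasurableSet {p : ℝ×ℝ | min (F p.2) (Ft t p.2) < p.1} :=
      measurableSet_lt ((hmF.comp measurable_snd).min (hmFt.comp measurable_snd)) measurable_fst
    have h4 : MeasurableSet {p : ℝ×ℝ | p.1 ≤ max (F p.2) (Ft t p.2)} :=
      measurableSet_le measurable_fst ((hmF.comp measurable_snd).max (hmFt.comp measurable_snd))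
    exact h1.inter (h2.inter (h3.inter h4))
  -- key pointwise bound
  have key : ∀ u ∈ Ioo (0:ℝ) (2*ε),
      ENNReal.ofReal |Ginv (Ft t) u - Ginv F u| ≤ volume (Prod.mk u ⁻¹' T) := by
    intro u hu
    obtain ⟨xu, hxu⟩ := hsurj u hu.1 (by linarith [hu.2])
    have hgu : Ginv F u = xu := by rw [hGinv]; exact hq _ _ hxu
    have hgt : Ginv (Ft t) u = sInf {x : ℝ | u ≤ Ft t x} := hGinv _ u
    set S : Set ℝ := {x : ℝ | u ≤ Ft t x} with hSdef
    have hSbdd : BddBelow S := hbdd u hu.1 hu.2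
    have hSne : S.Nonempty := by
      obtain ⟨y, hy⟩ := hsurj ((1 + 2*ε + c)/2) (by linarith) (by linarith)
      refine ⟨y, ?_⟩
      show u ≤ Ft t y
      rw [hFt]
      have h1 : -(|t| * |z t y|) ≤ t * z t y := by
        rw [← abs_mul]; exact neg_abs_le _
      have h2 : |t| * |z t y| ≤ c := by
        rw [hcdef]; exact mul_le_mul_of_nonneg_left (hz t y) (abs_nonneg t)
      have hu2 := hu.2
      rw [hy]
      linarith
    set q : ℝ := sInf S with hqdef
    rw [hgu, hgt]
    have hvol : ENNReal.ofReal |q - xu| = volume (Ioo (min xu q) (max xu q)) := by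
      rw [Real.volume_Ioo, max_sub_min_eq_abs, abs_sub_comm]
    rw [hvol]
    refine measure_mono ?_
    intro x hx
    simp only [mem_preimage, hTdef, mem_setOf_eq]
    rcases le_or_gt xu q with hcase | hcase
    · rw [min_eq_left hcase, max_eq_right hcase] at hx
      obtain ⟨hx1, hx2⟩ := hx
      have hFxu : u < F x := by rw [← hxu]; exact hFsm hx1
      have hFtx : Ft t x < u := by
        by_contra hcc
        push_neg at hcc
        exact absurd (csInf_le hSbdd hcc) (not_le.2 hx2)
      refine ⟨hu, ?_, lt_of_le_of_lt (min_le_right _ _) hFtx,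
        le_trans hFxu.le (le_max_left _ _)⟩
      -- x ≤ xa
      have h1 : F x ≤ Ft t x + c := by
        rw [hFt]
        have h2 : -(|t| * |z t x|) ≤ t * z t x := by rw [← abs_mul]; exact neg_abs_le _
        have h3 : |t| * |z t x| ≤ c := mul_le_mul_of_nonneg_left (hz t x) (abs_nonneg t)
        linarith
      have h4 : F x < F xa := by rw [hxa]; linarith [hu.2]
      exact (hFsm.lt_iff_lt.1 h4).le
    · rw [min_eq_right hcase.le, max_eq_left hcase.le] at hx
      obtain ⟨hx1, hx2⟩ := hx
      have hFx : F x < u := by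
        rw [← hxu]
        exact hFsm hx2
      refine ⟨hu, ?_, lt_of_le_of_lt (min_le_left _ _) hFx, ?_⟩
      · have h4 : F x < F xa := by rw [hxa]; linarith [hu.2]
        exact (hFsm.lt_iff_lt.1 h4).le
      · obtain ⟨w, hw, hwx⟩ := exists_lt_of_csInf_lt hSne hx1
        exact le_trans (le_trans hw (hFtmono t hwx.le)) (le_max_right _ _)
  -- put everything together
  calc (∫⁻ u in Set.Ioo (0:ℝ) (2 * ε), ENNReal.ofReal |Ginv (Ft t) u - Ginv F u|)
      ≤ ∫⁻ u in Set.Ioo (0:ℝ) (2 * ε), volume (Prod.mk u ⁻¹' T) :=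
        lintegral_mono_ae ((ae_restrict_iff' measurableSet_Ioo).2 (ae_of_all _ key))
    _ ≤ ∫⁻ u, volume (Prod.mk u ⁻¹' T) := setLIntegral_le_lintegral _ _
    _ = (volume.prod volume) T := (Measure.prod_apply hT).symm
    _ = ∫⁻ x, volume ((fun u => (u, x)) ⁻¹' T) := Measure.prod_apply_symm hT
    _ ≤ ∫⁻ x, (Set.Iic xa).indicator
          (fun x => ENNReal.ofReal |t| * ENNReal.ofReal |z t x|) x := by
        refine lintegral_mono fun x => ?_
        by_cases hxxa : x ≤ xa
        · rw [Set.indicator_of_mem (mem_Iic.mpr hxxa)]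
          have hsub : ((fun u => (u, x)) ⁻¹' T) ⊆
              Ioc (min (F x) (Ft t x)) (max (F x) (Ft t x)) := by
            intro u hu
            exact ⟨hu.2.2.1, hu.2.2.2⟩
          refine le_trans (measure_mono hsub) ?_
          rw [Real.volume_Ioc, max_sub_min_eq_abs]
          have : |Ft t x - F x| = |t| * |z t x| := by
            rw [hFt]
            rw [show F x + t * z t x - F x = t * z t x by ring, abs_mul]
          rw [this, ENNReal.ofReal_mul (abs_nonneg t)]
        · rw [Set.indicator_of_notMem (fun hcc => hxxa (mem_Iic.mp hcc))]
          have : ((fun u => (u, x)) ⁻¹' T) = ∅ := by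
            ext u
            simp only [mem_preimage, hTdef, mem_setOf_eq, mem_empty_iff_false, iff_false]
            intro hcc
            exact hxxa hcc.2.1
          rw [this, measure_empty]
    _ = ∫⁻ x in Set.Iic xa, ENNReal.ofReal |t| * ENNReal.ofReal |z t x| :=
        lintegral_indicator measurableSet_Iic _
    _ = ENNReal.ofReal |t| * ∫⁻ x in Set.Iic xa, ENNReal.ofReal |z t x| :=
        lintegral_const_mul' _ _ ENNReal.ofReal_ne_top
end

section
/- Let K_t, K : [0,1] → ℝ with K_t → K uniformly, each K_t and K nondecreasing and M-Lipschitz, and let z : (0,1) → ℝ be a bounded function that is ladcag (left-continuous with right limits) on a compact interval [δ, 1−δ]. Then ∫_δ^{1−δ} z d(K_t − K) → 0 as t → 0, where the integrals are Lebesgue–Stieltjes integrals. -/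
open MeasureTheory Set Filter Topology
open scoped ENNReal NNReal

/-!
An `M`-Lipschitz Stieltjes function has measure at most `M` times Lebesgue measure. So if `g` is
continuous with compact support and `‖1_I z - g‖_{L¹} ≤ ε`, then `∫_I z dKₜ` and `∫_I g dKₜ` differ
by at most `M ε` uniformly in `t`, and likewise for `K`. For continuous `g`, `∫_I g dF` is
uniformly approximated by Riemann–Stieltjes sums over a fixed fine partition, and these sums
converge since `Kₜ → K` at the finitely many partition points.
-/
theorem Metric.tendsto_of_forall_approx {α β : Type*} [PseudoMetricSpace β] {l : Filter α}
    {f : α → β} {a : β}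
    (h : ∀ ε > 0, ∃ (g : α → β) (b : β), Tendsto g l (𝓝 b) ∧
      (∀ᶠ t in l, dist (f t) (g t) ≤ ε) ∧ dist b a ≤ ε) :
    Tendsto f l (𝓝 a) := by
  refine Metric.tendsto_nhds.2 fun ε hε => ?_
  obtain ⟨g, b, hg, hfg, hb⟩ := h (ε / 3) (by positivity)
  filter_upwards [hfg, Metric.tendsto_nhds.1 hg (ε / 3) (by positivity)] with t hft hgt
  calc dist (f t) a ≤ dist (f t) (g t) + dist (g t) b + dist b a := dist_triangle4 _ _ _ _
    _ < ε := by linarith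

theorem MeasureTheory.norm_setIntegral_le_of_le_smul {α E : Type*} [MeasurableSpace α]
    [NormedAddCommGroup E] [NormedSpace ℝ E] {μ ν : Measure α} {c : ℝ≥0} (hμν : μ ≤ c • ν)
    {f : α → E} (hf : Integrable f ν) (s : Set α) :
    ‖∫ x in s, f x ∂μ‖ ≤ c * ∫ x, ‖f x‖ ∂ν := by
  have hfcν : Integrable f (c • ν) := hf.smul_measure ENNReal.coe_ne_top
  have hf_nonneg : ∀ μ' : Measure α, 0 ≤ᵐ[μ'] fun x => ‖f x‖ :=
    fun _ => ae_of_all _ fun _ => norm_nonneg _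
  calc ‖∫ x in s, f x ∂μ‖ ≤ ∫ x in s, ‖f x‖ ∂μ := norm_integral_le_integral_norm _
    _ ≤ ∫ x, ‖f x‖ ∂μ := setIntegral_le_integral (hfcν.mono_measure hμν).norm (hf_nonneg _)
    _ ≤ ∫ x, ‖f x‖ ∂(c • ν) := integral_mono_measure hμν (hf_nonneg _) hfcν.norm
    _ = c * ∫ x, ‖f x‖ ∂ν := integral_smul_nnreal_measure _ _

theorem StieltjesFunction.measure_le_smul_volume {M : ℝ≥0} {F : StieltjesFunction ℝ}
    (hF : LipschitzWith M F) : F.measure ≤ M • volume := by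
  let G : StieltjesFunction ℝ :=
    { toFun := fun x => M * x - F x
      mono' := fun x y hxy => by
        have := hF.le_add_mul y x
        rw [Real.dist_eq, abs_of_nonneg (sub_nonneg.2 hxy)] at this
        dsimp only
        linarith
      right_continuous' := fun x =>
        ((continuous_const.mul continuous_id).sub hF.continuous).continuousWithinAt }
  have hFG : F + G = M • StieltjesFunction.id := by
    ext x
    change F x + (M * x - F x) = M * x
    ring
  calc F.measure ≤ F.measure + G.measure := Measure.le_add_right le_rfl
    _ = M • volume := by
      rw [← StieltjesFunction.measure_add, hFG, StieltjesFunction.measure_smul,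
        ← Real.volume_eq_stieltjes_id]

def riemannStieltjesSum (F g : ℝ → ℝ) (p : ℕ → ℝ) (n : ℕ) : ℝ :=
  ∑ k ∈ Finset.range n, g (p (k + 1)) * (F (p (k + 1)) - F (p k))

theorem ContinuousOn.exists_partition_abs_sub_le {g : ℝ → ℝ} {a b η : ℝ} (hab : a ≤ b)
    (hg : ContinuousOn g (Icc a b)) (hη : 0 < η) :
    ∃ (n : ℕ) (p : ℕ → ℝ), Monotone p ∧ p 0 = a ∧ p n = b ∧
      ∀ k < n, ∀ x ∈ Ioc (p k) (p (k + 1)), |g x - g (p (k + 1))| ≤ η := by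
  obtain ⟨d, hd, hgd⟩ := Metric.uniformContinuousOn_iff_le.1
    (isCompact_Icc.uniformContinuousOn_of_continuous hg) η hη
  obtain ⟨n, hn⟩ := exists_nat_gt ((b - a) / d)
  have hn0 : (0 : ℝ) < n := (div_nonneg (sub_nonneg.2 hab) hd.le).trans_lt hn
  set w := (b - a) / n with hw_def
  have hw : 0 ≤ w := div_nonneg (sub_nonneg.2 hab) hn0.le
  have hwd : w ≤ d := by
    rw [div_lt_iff₀ hd] at hn
    rw [hw_def, div_le_iff₀ hn0]
    linarith
  have hnw : n * w = b - a := by rw [hw_def]; field_simp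
  refine ⟨n, fun k => a + k * w, fun i j hij => ?_, by simp, by simp [hnw], fun k hk x hx => ?_⟩
  · dsimp only
    gcongr
  · dsimp only at hx ⊢
    push_cast at hx ⊢
    have hk1 : (k : ℝ) + 1 ≤ n := by exact_mod_cast hk
    have hkw : ((k : ℝ) + 1) * w ≤ b - a := hnw ▸ mul_le_mul_of_nonneg_right hk1 hw
    have hxI : x ∈ Icc a b := ⟨by nlinarith [hx.1], by linarith [hx.2]⟩
    have hpI : a + ((k : ℝ) + 1) * w ∈ Icc a b := ⟨by nlinarith, by linarith⟩
    rw [← Real.dist_eq]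
    refine hgd x hxI _ hpI ?_
    rw [Real.dist_eq, abs_sub_comm, abs_of_nonneg (by linarith [hx.2])]
    linarith [hx.1]

namespace StieltjesFunction

theorem abs_intervalIntegral_sub_mul_le (F : StieltjesFunction ℝ) {g : ℝ → ℝ} {a b η : ℝ}
    (hab : a ≤ b) (hg : IntervalIntegrable g F.measure a b)
    (hη : ∀ x ∈ Ioc a b, |g x - g b| ≤ η) :
    |(∫ x in a..b, g x ∂F.measure) - g b * (F b - F a)| ≤ η * (F b - F a) := by
  have hFab : F.measure.real (Ioc a b) = F b - F a := by
    rw [measureReal_def, F.measure_Ioc, ENNReal.toReal_ofReal (sub_nonneg.2 (F.mono hab))]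
  have hconst : (∫ _ in a..b, g b ∂F.measure) = g b * (F b - F a) := by
    rw [intervalIntegral.integral_of_le hab, setIntegral_const, hFab, smul_eq_mul, mul_comm]
  rw [← hconst, ← intervalIntegral.integral_sub hg intervalIntegrable_const,
    intervalIntegral.integral_of_le hab, ← hFab]
  exact norm_setIntegral_le_of_norm_le_const (f := fun x => g x - g b) measure_Ioc_lt_top hη

theorem abs_intervalIntegral_sub_riemannStieltjesSum_le (F : StieltjesFunction ℝ) {g : ℝ → ℝ}
    {p : ℕ → ℝ} {n : ℕ} {η : ℝ} (hp : Monotone p)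
    (hg : IntervalIntegrable g F.measure (p 0) (p n))
    (hη : ∀ k < n, ∀ x ∈ Ioc (p k) (p (k + 1)), |g x - g (p (k + 1))| ≤ η) :
    |(∫ x in p 0..p n, g x ∂F.measure) - riemannStieltjesSum F g p n|
      ≤ η * (F (p n) - F (p 0)) := by
  have hg_piece : ∀ k < n, IntervalIntegrable g F.measure (p k) (p (k + 1)) := fun k hk =>
    hg.mono_set <| uIcc_subset_uIcc (mem_uIcc_of_le (hp k.zero_le) (hp hk.le))
      (mem_uIcc_of_le (hp (k + 1).zero_le) (hp hk))
  rw [← intervalIntegral.sum_integral_adjacent_intervals hg_piece, riemannStieltjesSum,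
    ← Finset.sum_sub_distrib, ← Finset.sum_range_sub (fun k => F (p k)), Finset.mul_sum]
  refine (Finset.abs_sum_le_sum_abs _ _).trans (Finset.sum_le_sum fun k hk => ?_)
  have hk := Finset.mem_range.1 hk
  exact F.abs_intervalIntegral_sub_mul_le (hp k.le_succ) (hg_piece k hk) (hη k hk)

theorem tendsto_intervalIntegral_of_tendsto {ι : Type*} {l : Filter ι}
    {Ft : ι → StieltjesFunction ℝ} {F : StieltjesFunction ℝ}
    (hFt : ∀ x, Tendsto (fun t => Ft t x) l (𝓝 (F x))) {g : ℝ → ℝ} {a b : ℝ} (hab : a ≤ b)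
    (hg : ContinuousOn g (Icc a b)) :
    Tendsto (fun t => ∫ x in a..b, g x ∂(Ft t).measure) l (𝓝 (∫ x in a..b, g x ∂F.measure)) := by
  refine Metric.tendsto_of_forall_approx fun ε hε => ?_
  set D := F b - F a + 1
  have hD : 0 < D := by linarith [F.mono hab]
  obtain ⟨n, p, hp, hp0, hpn, hpg⟩ := hg.exists_partition_abs_sub_le hab (div_pos hε hD)
  have hRS : ∀ G : StieltjesFunction ℝ, G b - G a ≤ D →
      dist (∫ x in a..b, g x ∂G.measure) (riemannStieltjesSum G g p n) ≤ ε := by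
    intro G hG
    have hgG : IntervalIntegrable g G.measure (p 0) (p n) := by
      rw [hp0, hpn]
      exact (uIcc_of_le hab ▸ hg).intervalIntegrable
    calc _ ≤ ε / D * (G b - G a) := by
          rw [Real.dist_eq, ← hp0, ← hpn]
          exact G.abs_intervalIntegral_sub_riemannStieltjesSum_le hp hgG hpg
      _ ≤ ε / D * D := by gcongr
      _ = ε := div_mul_cancel₀ ε hD.ne'
  refine ⟨fun t => riemannStieltjesSum (Ft t) g p n, riemannStieltjesSum F g p n, ?_, ?_, ?_⟩
  · exact tendsto_finsetSum _ fun k _ => tendsto_const_nhds.mul ((hFt _).sub (hFt _))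
  · filter_upwards [((hFt b).sub (hFt a)).eventually_le_const (lt_add_one _)] with t ht
    exact hRS (Ft t) ht
  · rw [dist_comm]
    exact hRS F (le_add_of_nonneg_right zero_le_one)

theorem tendsto_setIntegral_Ioc_of_tendsto {ι : Type*} {l : Filter ι}
    {Ft : ι → StieltjesFunction ℝ} {F : StieltjesFunction ℝ}
    (hFt : ∀ x, Tendsto (fun t => Ft t x) l (𝓝 (F x))) {g : ℝ → ℝ} {a b : ℝ}
    (hg : ContinuousOn g (Icc a b)) :
    Tendsto (fun t => ∫ x in Ioc a b, g x ∂(Ft t).measure) l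
      (𝓝 (∫ x in Ioc a b, g x ∂F.measure)) := by
  rcases le_or_gt a b with hab | hba
  · simpa only [intervalIntegral.integral_of_le hab] using
      tendsto_intervalIntegral_of_tendsto hFt hab hg
  · simp only [Ioc_eq_empty (not_lt.2 hba.le), Measure.restrict_empty, integral_zero_measure,
      tendsto_const_nhds]

end StieltjesFunction

theorem MeasureTheory.tendsto_setIntegral_of_le_smul_of_tendsto_continuous {ι α E : Type*}
    [TopologicalSpace α] [NormalSpace α] [R1Space α] [WeaklyLocallyCompactSpace α]
    [MeasurableSpace α] [BorelSpace α] [NormedAddCommGroup E] [NormedSpace ℝ E]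
    {l : Filter ι} {ν : Measure α} [ν.Regular] {μt : ι → Measure α} {μ : Measure α} {c : ℝ≥0}
    (hμt : ∀ t, μt t ≤ c • ν) (hμ : μ ≤ c • ν) {s : Set α} (hs : MeasurableSet s)
    (hcont : ∀ g : α → E, Continuous g → HasCompactSupport g →
      Tendsto (fun t => ∫ x in s, g x ∂μt t) l (𝓝 (∫ x in s, g x ∂μ)))
    {f : α → E} (hf : IntegrableOn f s ν) :
    Tendsto (fun t => ∫ x in s, f x ∂μt t) l (𝓝 (∫ x in s, f x ∂μ)) := by
  refine Metric.tendsto_of_forall_approx fun ε hε => ?_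
  have hfs : Integrable (s.indicator f) ν := hf.integrable_indicator hs
  obtain ⟨g, hg_supp, hfg, hg_cont, hg_int⟩ :=
    hfs.exists_hasCompactSupport_integral_sub_le (show 0 < ε / (c + 1) by positivity)
  have happrox : ∀ μ' ≤ c • ν, dist (∫ x in s, f x ∂μ') (∫ x in s, g x ∂μ') ≤ ε := by
    intro μ' hμ'
    have hdom : ∀ h : α → E, Integrable h ν → IntegrableOn h s μ' := fun h hh =>
      ((hh.smul_measure ENNReal.coe_ne_top).mono_measure hμ').integrableOn
    have hdiff : ∫ x in s, f x ∂μ' - ∫ x in s, g x ∂μ' =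
        ∫ x in s, (s.indicator f x - g x) ∂μ' := by
      rw [integral_sub (hdom _ hfs) (hdom _ hg_int)]
      congr 1
      exact (setIntegral_congr_fun hs fun x hx => indicator_of_mem hx f).symm
    rw [dist_eq_norm, hdiff]
    calc _ ≤ c * ∫ x, ‖s.indicator f x - g x‖ ∂ν :=
          norm_setIntegral_le_of_le_smul hμ' (hfs.sub hg_int) s
      _ ≤ c * (ε / (c + 1)) := mul_le_mul_of_nonneg_left hfg c.coe_nonneg
      _ ≤ ε := by
        rw [mul_div_assoc', div_le_iff₀ (by positivity)]
        nlinarith [c.coe_nonneg]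
  exact ⟨fun t => ∫ x in s, g x ∂μt t, ∫ x in s, g x ∂μ, hcont g hg_cont hg_supp,
    Eventually.of_forall fun t => happrox _ (hμt t),
    dist_comm (∫ x in s, f x ∂μ) _ ▸ happrox μ hμ⟩

theorem stmt15_general (M : ℝ≥0) (Kt : ℝ → StieltjesFunction ℝ) (K : StieltjesFunction ℝ)
    (hKtLip : ∀ t, LipschitzWith M (Kt t)) (hKLip : LipschitzWith M K)
    (hunif : TendstoUniformly (fun t => ((Kt t : ℝ → ℝ))) K (𝓝[≠] (0:ℝ)))
    (z : ℝ → ℝ) (hzm : Measurable z) (C : ℝ) (hzb : ∀ u, |z u| ≤ C)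
    (δ : ℝ) :
    Tendsto (fun t => (∫ u in Set.Ioc δ (1 - δ), z u ∂(Kt t).measure)
        - ∫ u in Set.Ioc δ (1 - δ), z u ∂K.measure) (𝓝[≠] (0:ℝ)) (𝓝 0) := by
  have hz : IntegrableOn z (Ioc δ (1 - δ)) volume :=
    IntegrableOn.of_bound measure_Ioc_lt_top hzm.aestronglyMeasurable C (ae_of_all _ hzb)
  refine tendsto_sub_nhds_zero_iff.2 <| tendsto_setIntegral_of_le_smul_of_tendsto_continuous
    (fun t => StieltjesFunction.measure_le_smul_volume (hKtLip t))
    (StieltjesFunction.measure_le_smul_volume hKLip) measurableSet_Ioc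
    (fun g hg _ => StieltjesFunction.tendsto_setIntegral_Ioc_of_tendsto hunif.tendsto_at
      hg.continuousOn) hz

theorem stmt15 (M : ℝ≥0) (Kt : ℝ → StieltjesFunction ℝ) (K : StieltjesFunction ℝ)
    (hKtLip : ∀ t, LipschitzWith M (Kt t)) (hKLip : LipschitzWith M K)
    (hunif : TendstoUniformly (fun t => ((Kt t : ℝ → ℝ))) K (𝓝[≠] (0:ℝ)))
    (z : ℝ → ℝ) (hzm : Measurable z) (C : ℝ) (hzb : ∀ u, |z u| ≤ C)
    (δ : ℝ) (hδ : δ ∈ Set.Ioo (0:ℝ) (1/2))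
    (hladcag : ∀ x ∈ Set.Icc δ (1 - δ),
      Tendsto z (𝓝[<] x) (𝓝 (z x)) ∧ ∃ L, Tendsto z (𝓝[>] x) (𝓝 L)) :
    Tendsto (fun t => (∫ u in Set.Ioc δ (1 - δ), z u ∂(Kt t).measure)
        - ∫ u in Set.Ioc δ (1 - δ), z u ∂K.measure) (𝓝[≠] (0:ℝ)) (𝓝 0) :=
  stmt15_general M Kt K hKtLip hKLip hunif z hzm C hzb δ
end
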